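/- arXiv:1506.04775 — 4 statements merged into one kernel-verified Lean document; each statement's English description precedes it below -/
import Mathlib

section
/- Let G ⊆ ℝⁿ be measurable and ν : G → (0,∞) measurable with ∫_G ν dx = 1. Let ℧ be a finite index set containing 0, let (φ_ℓ)_{ℓ∈℧} be functions G → ℂ orthonormal in L²(G, ν dx) with φ_0 ≡ 1, let Λ be a finite set with N = #Λ, and let Φ : G → ℂ^N be a measurable map satisfying the algebraic-closedness identity Φ(x)Φ(x)* = Σ_{ℓ∈℧} φ_ℓ(x) E_ℓ for all x ∈ G, where E_ℓ ∈ ℂ^{N×N} are fixed matrices with E_0 = I_N. Then for any Hermitian positive semidefinite S with Tr S = 1, the PDF p(x) := ν(x) Φ(x)* S Φ(x) satisfies ∫_G p(x)²/ν(x) dx = 1 + Σ_{ℓ∈℧\{0}} |⟨E_ℓ, S⟩|², where ⟨X, Y⟩ = Tr(X*Y); equivalently, the second-order relative Rényi entropy R(p‖ν) := ln ∫_G p²/ν dx equals ln(1 + Σ_{ℓ∈℧\{0}} |⟨E_ℓ, S⟩|²). -/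
/-!
Since `ΦΦ* = ∑ φ_ℓ E_ℓ`, the quadratic form `Φ* S Φ = Tr (ΦΦ* S)` is the expansion
`∑ φ_ℓ c_ℓ` with coefficients `c_ℓ = Tr (E_ℓ S)`; it is real because `S` is Hermitian, so
`p² / ν = ν |∑ φ_ℓ c_ℓ|²`. Orthonormality of the `φ_ℓ` in `L²(ν)` turns the integral into
Parseval's sum `∑ |c_ℓ|²`, whose `ℓ₀` term is `|Tr S|² = 1`, and `|Tr (E_ℓ S)| = |⟨E_ℓ, S⟩|`.
-/

open MeasureTheory Matrix ComplexOrder ComplexConjugate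

namespace Matrix

variable {ι R : Type*} [Fintype ι]

theorem trace_vecMulVec_mul [CommSemiring R] (v w : ι → R) (S : Matrix ι ι R) :
    (vecMulVec v w * S).trace = w ⬝ᵥ S *ᵥ v := by
  rw [vecMulVec_mul, trace_vecMulVec, dotProduct_comm, dotProduct_mulVec]

theorem dotProduct_mulVec_eq_sum_mul_trace [CommSemiring R] {κ : Type*} [Fintype κ]
    {v w : ι → R} {a : κ → R} {E : κ → Matrix ι ι R}
    (h : vecMulVec v w = ∑ ℓ, a ℓ • E ℓ) (S : Matrix ι ι R) :
    w ⬝ᵥ S *ᵥ v = ∑ ℓ, a ℓ * (E ℓ * S).trace := by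
  simp only [← trace_vecMulVec_mul, h, Finset.sum_mul, trace_sum, smul_mul, trace_smul,
    smul_eq_mul]

theorem IsHermitian.trace_conjTranspose_mul [CommSemiring R] [StarRing R] {S : Matrix ι ι R}
    (hS : S.IsHermitian) (E : Matrix ι ι R) : (Eᴴ * S).trace = star (E * S).trace := by
  rw [← trace_conjTranspose, conjTranspose_mul, hS.eq, trace_mul_comm]

end Matrix

namespace MeasureTheory

theorem integral_norm_sum_mul_sq_mul_of_orthonormal {X κ : Type*} [MeasurableSpace X]
    {μ : Measure X} [Fintype κ] [DecidableEq κ] {ψ : κ → X → ℂ} {w : X → ℝ}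
    (hint : ∀ ℓ m, Integrable (fun x => conj (ψ ℓ x) * ψ m x * (w x : ℂ)) μ)
    (horth : ∀ ℓ m, ∫ x, conj (ψ ℓ x) * ψ m x * (w x : ℂ) ∂μ = if ℓ = m then 1 else 0)
    (c : κ → ℂ) :
    ∫ x, ‖∑ ℓ, c ℓ * ψ ℓ x‖ ^ 2 * w x ∂μ = ∑ ℓ, ‖c ℓ‖ ^ 2 := by
  have expand : ∀ x, ((‖∑ ℓ, c ℓ * ψ ℓ x‖ ^ 2 * w x : ℝ) : ℂ) =
      ∑ ℓ, ∑ m, conj (c ℓ) * c m * (conj (ψ ℓ x) * ψ m x * w x) := by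
    intro x
    rw [Complex.ofReal_mul, Complex.ofReal_pow, ← Complex.conj_mul', map_sum,
      Finset.sum_mul_sum, Finset.sum_mul]
    refine Finset.sum_congr rfl fun ℓ _ => ?_
    rw [Finset.sum_mul]
    refine Finset.sum_congr rfl fun m _ => ?_
    simp only [map_mul]
    ring
  apply Complex.ofReal_injective
  rw [← integral_complex_ofReal, integral_congr_ae (.of_forall expand),
    integral_finsetSum _ fun ℓ _ => integrable_finsetSum _ fun m _ => (hint ℓ m).const_mul _]
  push_cast
  refine Finset.sum_congr rfl fun ℓ _ => ?_
  rw [integral_finsetSum _ fun m _ => (hint ℓ m).const_mul _]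
  simp only [integral_const_mul, horth, mul_ite, mul_one, mul_zero, Finset.sum_ite_eq,
    Finset.mem_univ, if_true, Complex.conj_mul']

end MeasureTheory

theorem sdm_renyi_entropy_general {n : ℕ} {ι κ : Type*} [Fintype ι] [DecidableEq ι]
    [Fintype κ] [DecidableEq κ] (ℓ₀ : κ)
    (G : Set (Fin n → ℝ)) (hG : MeasurableSet G)
    (ν : (Fin n → ℝ) → ℝ)
    (φ : κ → (Fin n → ℝ) → ℂ)
    (horthint : ∀ ℓ m : κ, Integrable
      (fun x => (starRingEnd ℂ) (φ ℓ x) * φ m x * (ν x : ℂ)) (volume.restrict G))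
    (horth : ∀ ℓ m : κ, (∫ x in G, (starRingEnd ℂ) (φ ℓ x) * φ m x * (ν x : ℂ))
      = if ℓ = m then 1 else 0)
    (Φ : (Fin n → ℝ) → ι → ℂ)
    (E : κ → Matrix ι ι ℂ) (hE0 : E ℓ₀ = 1)
    (hclosed : ∀ x ∈ G, vecMulVec (Φ x) (star (Φ x)) = ∑ ℓ : κ, φ ℓ x • E ℓ)
    (S : Matrix ι ι ℂ) (hS : S.PosSemidef) (htr : S.trace = 1)
    (p : (Fin n → ℝ) → ℝ)
    (hp : ∀ x, p x = ν x * ((star (Φ x)) ⬝ᵥ S.mulVec (Φ x)).re) :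
    (∫ x in G, (p x) ^ 2 / ν x)
      = 1 + ∑ ℓ ∈ Finset.univ.erase ℓ₀, ‖((E ℓ)ᴴ * S).trace‖ ^ 2 := by
  set c : κ → ℂ := fun ℓ => (E ℓ * S).trace
  have hpoint : ∀ x ∈ G, p x ^ 2 / ν x = ‖∑ ℓ, c ℓ * φ ℓ x‖ ^ 2 * ν x := by
    intro x hx
    have hquad : star (Φ x) ⬝ᵥ S *ᵥ Φ x = ∑ ℓ, c ℓ * φ ℓ x := by
      simp only [dotProduct_mulVec_eq_sum_mul_trace (hclosed x hx), c, mul_comm]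
    have hreal : (star (Φ x) ⬝ᵥ S *ᵥ Φ x).im = 0 := hS.1.im_star_dotProduct_mulVec_self (Φ x)
    rw [hp, ← hquad, Complex.sq_norm, Complex.normSq_apply, hreal, mul_zero, add_zero]
    rcases eq_or_ne (ν x) 0 with hν | hν
    · simp [hν]
    · field_simp
  calc (∫ x in G, p x ^ 2 / ν x)
      = ∫ x in G, ‖∑ ℓ, c ℓ * φ ℓ x‖ ^ 2 * ν x := setIntegral_congr_fun hG hpoint
    _ = ∑ ℓ, ‖c ℓ‖ ^ 2 := integral_norm_sum_mul_sq_mul_of_orthonormal horthint horth c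
    _ = 1 + ∑ ℓ ∈ Finset.univ.erase ℓ₀, ‖((E ℓ)ᴴ * S).trace‖ ^ 2 := by
      rw [← Finset.add_sum_erase _ _ (Finset.mem_univ ℓ₀)]
      simp [c, hE0, htr, hS.1.trace_conjTranspose_mul]

/-- For an algebraically closed orthonormal family with
structure matrices `E ℓ` (where `φ ℓ₀ ≡ 1` and `E ℓ₀ = I`), the SDM-generated
PDF `p = ν Φ* S Φ` satisfies
`∫_G p²/ν dx = 1 + ∑_{ℓ ≠ ℓ₀} |⟨E ℓ, S⟩|²`, i.e. the second-order relative
Rényi entropy `R(p‖ν)` equals `ln(1 + ∑_{ℓ ≠ ℓ₀} |⟨E ℓ, S⟩|²)`. -/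
theorem sdm_renyi_entropy {n : ℕ} {ι κ : Type*} [Fintype ι] [DecidableEq ι]
    [Fintype κ] [DecidableEq κ] (ℓ₀ : κ)
    (G : Set (Fin n → ℝ)) (hG : MeasurableSet G)
    (ν : (Fin n → ℝ) → ℝ) (hνmeas : Measurable ν) (hνpos : ∀ x ∈ G, 0 < ν x)
    (hν1 : (∫ x in G, ν x) = 1)
    (φ : κ → (Fin n → ℝ) → ℂ) (hφmeas : ∀ ℓ, Measurable (φ ℓ))
    (hφ0 : ∀ x ∈ G, φ ℓ₀ x = 1)
    (horthint : ∀ ℓ m : κ, Integrable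
      (fun x => (starRingEnd ℂ) (φ ℓ x) * φ m x * (ν x : ℂ)) (volume.restrict G))
    (horth : ∀ ℓ m : κ, (∫ x in G, (starRingEnd ℂ) (φ ℓ x) * φ m x * (ν x : ℂ))
      = if ℓ = m then 1 else 0)
    (Φ : (Fin n → ℝ) → ι → ℂ) (hΦmeas : Measurable Φ)
    (E : κ → Matrix ι ι ℂ) (hE0 : E ℓ₀ = 1)
    (hclosed : ∀ x ∈ G, vecMulVec (Φ x) (star (Φ x)) = ∑ ℓ : κ, φ ℓ x • E ℓ)
    (S : Matrix ι ι ℂ) (hS : S.PosSemidef) (htr : S.trace = 1)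
    (p : (Fin n → ℝ) → ℝ)
    (hp : ∀ x, p x = ν x * ((star (Φ x)) ⬝ᵥ S.mulVec (Φ x)).re)
    (hpint : Integrable (fun x => (p x) ^ 2 / ν x) (volume.restrict G)) :
    (∫ x in G, (p x) ^ 2 / ν x)
      = 1 + ∑ ℓ ∈ Finset.univ.erase ℓ₀, ‖((E ℓ)ᴴ * S).trace‖ ^ 2 :=
  sdm_renyi_entropy_general ℓ₀ G hG ν φ horthint horth Φ E hE0 hclosed S hS htr p hp
end

section
/- Let G ⊆ ℝⁿ be measurable, ν : G → (0,∞) measurable with ∫_G ν dx = 1, and let (φ_k) be functions G → ℂ orthonormal in L²(G, ν dx), indexed so that Λ and ℧ are finite index sets with N = #Λ, L = #℧. Define Φ(x) = (φ_k(x))_{k∈Λ} and structure matrices E_ℓ := ∫_G conj(φ_ℓ(x)) Φ(x)Φ(x)* ν(x) dx for ℓ ∈ ℧, and assume E_ℓ ≠ 0 for each ℓ ∈ ℧. Let H_Λ := span{φ_k : k ∈ Λ}, H_℧ := span{φ_ℓ : ℓ ∈ ℧}, and Q_Λ := { f·conj(g) : f, g ∈ H_Λ }. Then the matrices (E_ℓ)_{ℓ∈℧}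 are linearly independent in ℂ^{N×N} (equivalently, the subspace span{E_ℓ : ℓ ∈ ℧} has full dimension L) if and only if the only function h ∈ H_℧ satisfying ∫_G f(x) conj(g(x)) conj(h(x)) ν(x) dx = 0 for all f, g ∈ H_Λ is h = 0, i.e. Q_Λ^⊥ ∩ H_℧ = {0} where the orthogonal complement is taken in L²(G, ν dx). -/
/-!
Write `h ∈ H_℧` as `h = ∑ c ℓ • φ℧ ℓ`. The form `(f, g) ↦ ∫ f conj(g) conj(h) ν` is sesquilinear,
so `h ⊥ Q_Λ` iff it vanishes on pairs of basis functions of `H_Λ`, i.e. iff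
`∑ conj (c ℓ) • E ℓ = 0`; and by orthonormality `h = 0` iff `c = 0`. Hence `Q_Λ^⊥ ∩ H_℧ = 0` iff
`c ↦ ∑ conj (c ℓ) • E ℓ` is injective, which is linear independence of `E` up to conjugating
the coefficients.
-/

open MeasureTheory Matrix ComplexConjugate Submodule

section

variable {α ι κ : Type*}

theorem mul_conj_sum_smul_mul [Fintype κ] (c : κ → ℂ) (φ : κ → α → ℂ) (F w : α → ℂ) (x : α) :
    F x * conj ((∑ ℓ, c ℓ • φ ℓ) x) * w x = ∑ ℓ, conj (c ℓ) * (F x * conj (φ ℓ x) * w x) := by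
  simp only [Finset.sum_apply, Pi.smul_apply, smul_eq_mul, map_sum, map_mul, Finset.mul_sum,
    Finset.sum_mul]
  exact Finset.sum_congr rfl fun ℓ _ => by ring

variable [MeasurableSpace α] {μ : Measure α}

theorem integral_sum_mul_left [Fintype κ] (c : κ → ℂ) {F : κ → α → ℂ}
    (hF : ∀ ℓ, Integrable (F ℓ) μ) :
    ∫ x, ∑ ℓ, c ℓ * F ℓ x ∂μ = ∑ ℓ, c ℓ * ∫ x, F ℓ x ∂μ := by
  rw [integral_finsetSum _ fun ℓ _ => (hF ℓ).const_mul (c ℓ)]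
  simp_rw [integral_const_mul]

theorem linearIndependent_of_integral_conj_mul_eq_ite [Fintype κ] [DecidableEq κ]
    {φ : κ → α → ℂ} {w : α → ℂ}
    (hint : ∀ ℓ m, Integrable (fun x => conj (φ ℓ x) * φ m x * w x) μ)
    (horth : ∀ ℓ m, ∫ x, conj (φ ℓ x) * φ m x * w x ∂μ = if ℓ = m then 1 else 0) :
    LinearIndependent ℂ φ := by
  refine Fintype.linearIndependent_iff.2 fun c hc m => ?_
  have hc' : ∀ x, ∑ ℓ, c ℓ * φ ℓ x = 0 := fun x => by
    simpa using congrFun hc x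
  calc c m = ∑ ℓ, c ℓ * ∫ x, conj (φ m x) * φ ℓ x * w x ∂μ := by simp [horth]
    _ = ∫ x, ∑ ℓ, c ℓ * (conj (φ m x) * φ ℓ x * w x) ∂μ :=
      (integral_sum_mul_left c (hint m)).symm
    _ = 0 := by
      refine integral_eq_zero_of_ae (.of_forall fun x => ?_)
      calc ∑ ℓ, c ℓ * (conj (φ m x) * φ ℓ x * w x)
          = conj (φ m x) * (∑ ℓ, c ℓ * φ ℓ x) * w x := by
            rw [Finset.mul_sum, Finset.sum_mul]
            exact Finset.sum_congr rfl fun ℓ _ => by ring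
        _ = 0 := by rw [hc' x, mul_zero, zero_mul]

theorem integrable_mul_conj_sum_smul_mul [Fintype κ] (c : κ → ℂ) {φ : κ → α → ℂ} {F w : α → ℂ}
    (hint : ∀ ℓ, Integrable (fun x => F x * conj (φ ℓ x) * w x) μ) :
    Integrable (fun x => F x * conj ((∑ ℓ, c ℓ • φ ℓ) x) * w x) μ := by
  simp_rw [mul_conj_sum_smul_mul]
  exact integrable_finsetSum _ fun ℓ _ => (hint ℓ).const_mul _

theorem integral_mul_conj_sum_smul_mul [Fintype κ] (c : κ → ℂ) {φ : κ → α → ℂ} {F w : α → ℂ}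
    (hint : ∀ ℓ, Integrable (fun x => F x * conj (φ ℓ x) * w x) μ) :
    ∫ x, F x * conj ((∑ ℓ, c ℓ • φ ℓ) x) * w x ∂μ =
      ∑ ℓ, conj (c ℓ) * ∫ x, F x * conj (φ ℓ x) * w x ∂μ := by
  simp_rw [mul_conj_sum_smul_mul]
  exact integral_sum_mul_left _ hint

theorem forall_mem_span_integral_mul_conj_mul_conj_mul_eq_zero_iff [Fintype ι]
    {ψ : ι → α → ℂ} {h w : α → ℂ}
    (hint : ∀ j k, Integrable (fun x => ψ j x * conj (ψ k x) * conj (h x) * w x) μ) :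
    (∀ f ∈ span ℂ (Set.range ψ), ∀ g ∈ span ℂ (Set.range ψ),
        ∫ x, f x * conj (g x) * conj (h x) * w x ∂μ = 0) ↔
      ∀ j k, ∫ x, ψ j x * conj (ψ k x) * conj (h x) * w x ∂μ = 0 := by
  refine ⟨fun H j k => H _ (subset_span ⟨j, rfl⟩) _ (subset_span ⟨k, rfl⟩), fun H f hf g hg => ?_⟩
  obtain ⟨a, rfl⟩ := (mem_span_range_iff_exists_fun ℂ).1 hf
  obtain ⟨b, rfl⟩ := (mem_span_range_iff_exists_fun ℂ).1 hg
  have hsplit : ∀ x, (∑ j, a j • ψ j) x * conj ((∑ k, b k • ψ k) x) * conj (h x) * w x =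
      ∑ j, a j * ∑ k, conj (b k) * (ψ j x * conj (ψ k x) * conj (h x) * w x) := fun x => by
    simp only [Finset.sum_apply, Pi.smul_apply, smul_eq_mul, map_sum, map_mul, Finset.mul_sum,
      Finset.sum_mul]
    rw [Finset.sum_comm]
    exact Finset.sum_congr rfl fun j _ => Finset.sum_congr rfl fun k _ => by ring
  simp_rw [hsplit]
  rw [integral_sum_mul_left _ fun j => integrable_finsetSum _ fun k _ => (hint j k).const_mul _]
  simp only [integral_sum_mul_left _ (hint _), H, mul_zero, Finset.sum_const_zero]

end

theorem sdm_structure_matrices_linearIndependent_iff_general {n : ℕ} {ι κ : Type*}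
    [Fintype ι] [Fintype κ] [DecidableEq κ]
    (G : Set (Fin n → ℝ))
    (ν : (Fin n → ℝ) → ℝ)
    (φΛ : ι → (Fin n → ℝ) → ℂ) (φ℧ : κ → (Fin n → ℝ) → ℂ)
    (horthint : ∀ ℓ m : κ, Integrable
      (fun x => (starRingEnd ℂ) (φ℧ ℓ x) * φ℧ m x * (ν x : ℂ)) (volume.restrict G))
    (horth : ∀ ℓ m : κ, (∫ x in G, (starRingEnd ℂ) (φ℧ ℓ x) * φ℧ m x * (ν x : ℂ))
      = if ℓ = m then 1 else 0)
    (htripint : ∀ (ℓ : κ) (j k : ι), Integrable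
      (fun x => φΛ j x * (starRingEnd ℂ) (φΛ k x) * (starRingEnd ℂ) (φ℧ ℓ x) * (ν x : ℂ))
      (volume.restrict G))
    (E : κ → Matrix ι ι ℂ)
    (hE : ∀ (ℓ : κ) (j k : ι), E ℓ j k =
      ∫ x in G, (starRingEnd ℂ) (φ℧ ℓ x) * (φΛ j x * (starRingEnd ℂ) (φΛ k x)) * (ν x : ℂ)) :
    LinearIndependent ℂ E ↔
      ∀ h ∈ Submodule.span ℂ (Set.range φ℧),
        (∀ f ∈ Submodule.span ℂ (Set.range φΛ), ∀ g ∈ Submodule.span ℂ (Set.range φΛ),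
          (∫ x in G, f x * (starRingEnd ℂ) (g x) * (starRingEnd ℂ) (h x) * (ν x : ℂ)) = 0)
        → h = 0 := by
  have hE' : ∀ ℓ j k, E ℓ j k =
      ∫ x in G, φΛ j x * conj (φΛ k x) * conj (φ℧ ℓ x) * (ν x : ℂ) := fun ℓ j k => by
    rw [hE]
    exact integral_congr_ae (.of_forall fun x => by ring)
  have horthogonal_iff : ∀ c : κ → ℂ,
      (∀ f ∈ span ℂ (Set.range φΛ), ∀ g ∈ span ℂ (Set.range φΛ),
        ∫ x in G, f x * conj (g x) * conj ((∑ ℓ, c ℓ • φ℧ ℓ) x) * (ν x : ℂ) = 0) ↔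
      ∑ ℓ, conj (c ℓ) • E ℓ = 0 := fun c => by
    rw [forall_mem_span_integral_mul_conj_mul_conj_mul_eq_zero_iff
      fun j k => integrable_mul_conj_sum_smul_mul c (htripint · j k), ← Matrix.ext_iff]
    refine forall₂_congr fun j k => ?_
    rw [integral_mul_conj_sum_smul_mul c (F := fun x => φΛ j x * conj (φΛ k x)) (htripint · j k)]
    simp [Matrix.sum_apply, hE']
  rw [Fintype.linearIndependent_iff]
  constructor
  · rintro hEind h hh hperp
    obtain ⟨c, rfl⟩ := (mem_span_range_iff_exists_fun ℂ).1 hh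
    have hc : c = 0 := funext fun ℓ => by
      simpa using hEind _ ((horthogonal_iff c).1 hperp) ℓ
    simp [hc]
  · intro H d hd ℓ
    have hsum := H _ (sum_mem fun ℓ _ => smul_mem _ _ (subset_span ⟨ℓ, rfl⟩))
      ((horthogonal_iff (conj ∘ d)).2 (by simpa using hd))
    simpa using Fintype.linearIndependent_iff.1
      (linearIndependent_of_integral_conj_mul_eq_ite horthint horth) _ hsum ℓ

/-- (Lemma 2 of the paper.) The structure matrices
`E ℓ = ∫_G conj(φ℧ ℓ) Φ Φ* ν dx`, all nonzero, are linearly independent (so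
that `span{E ℓ}` has full dimension `L = #℧`) if and only if the only
`h ∈ H_℧` orthogonal in `L²(G, ν dx)` to all products `f · conj(g)` with
`f, g ∈ H_Λ` is `h = 0`, i.e. `Q_Λ^⊥ ∩ H_℧ = {0}`. -/
theorem sdm_structure_matrices_linearIndependent_iff {n : ℕ} {ι κ : Type*}
    [Fintype ι] [DecidableEq ι] [Fintype κ] [DecidableEq κ]
    (G : Set (Fin n → ℝ)) (hG : MeasurableSet G)
    (ν : (Fin n → ℝ) → ℝ) (hνmeas : Measurable ν) (hνpos : ∀ x ∈ G, 0 < ν x)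
    (hν1 : (∫ x in G, ν x) = 1)
    (φΛ : ι → (Fin n → ℝ) → ℂ) (φ℧ : κ → (Fin n → ℝ) → ℂ)
    (hφΛmeas : ∀ k, Measurable (φΛ k)) (hφ℧meas : ∀ ℓ, Measurable (φ℧ ℓ))
    (horthint : ∀ ℓ m : κ, Integrable
      (fun x => (starRingEnd ℂ) (φ℧ ℓ x) * φ℧ m x * (ν x : ℂ)) (volume.restrict G))
    (horth : ∀ ℓ m : κ, (∫ x in G, (starRingEnd ℂ) (φ℧ ℓ x) * φ℧ m x * (ν x : ℂ))
      = if ℓ = m then 1 else 0)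
    (htripint : ∀ (ℓ : κ) (j k : ι), Integrable
      (fun x => φΛ j x * (starRingEnd ℂ) (φΛ k x) * (starRingEnd ℂ) (φ℧ ℓ x) * (ν x : ℂ))
      (volume.restrict G))
    (E : κ → Matrix ι ι ℂ)
    (hE : ∀ (ℓ : κ) (j k : ι), E ℓ j k =
      ∫ x in G, (starRingEnd ℂ) (φ℧ ℓ x) * (φΛ j x * (starRingEnd ℂ) (φΛ k x)) * (ν x : ℂ))
    (hEne : ∀ ℓ : κ, E ℓ ≠ 0) :
    LinearIndependent ℂ E ↔
      ∀ h ∈ Submodule.span ℂ (Set.range φ℧),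
        (∀ f ∈ Submodule.span ℂ (Set.range φΛ), ∀ g ∈ Submodule.span ℂ (Set.range φΛ),
          (∫ x in G, f x * (starRingEnd ℂ) (g x) * (starRingEnd ℂ) (h x) * (ν x : ℂ)) = 0)
        → h = 0 :=
  sdm_structure_matrices_linearIndependent_iff_general G ν φΛ φ℧ horthint horth htripint E hE
end

section
/- Let N ≥ 1, μ > 0, and let 𝒜 be a positive semidefinite self-adjoint linear operator on the Hermitian N×N matrices. For Hermitian positive definite S let F_S(X) := 𝒜(X) + μ S^{-1} X S^{-1}. Suppose S : [0,T] → ℂ^{N×N} is a differentiable matrix-valued function with S(t) Hermitian positive definite and Tr S(t) = 1 for all t, λ : [0,T] → ℝ is differentiable, and B : [0,T] → ℂ^{N×N} is a differentiable Hermitian-valued function with derivative Ḃ(t) = K(t), such that the stationarity equation 𝒜(S(t)) − μ S(t)^{-1} = λ(t) I_N + B(t) holds for all t ∈ [0,T]. Then S satisfies the ordinary differential equation Ṡ(t) = F_{S(t)}^{-1}(K(t)) − (Tr F_{S(t)}^{-1}(K(t)) / Tr F_{S(t)}^{-1}(I_N)) · F_{S(t)}^{-1}(I_N). -/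
/-!
Write `R = 𝒜(S) - λ I - B`. The stationarity equation says `S R = μ I` on `[0, T]`, so
the product rule gives `Ṡ R + S Ṙ = 0`, i.e. `F_S(Ṡ) = λ̇ I + K`. Since `F_S(Y) = I` and
`F_S(X) = K`, the Hermitian matrix `Ṡ - X - λ̇ Y` lies in the kernel of `F_S`. On Hermitian
matrices `F_S` is injective: writing `S⁻¹ = y* y`,
`tr (Z F_S(Z)) ≥ μ tr (Z S⁻¹ Z S⁻¹) = μ ‖y Z y*‖²_F`, which is positive unless `Z = 0`.
Hence `Ṡ = X + λ̇ Y`, and differentiating `tr S = 1` gives `tr X + λ̇ tr Y = 0`, which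
determines `λ̇` (when `tr Y = 0`, the same positivity forces `Y = 0`).
-/

open Matrix ComplexOrder Set

/-- The operator `F_S(X) = 𝒜(X) + μ S⁻¹ X S⁻¹`. -/
noncomputable def Fop {N : ℕ}
    (A : Matrix (Fin N) (Fin N) ℂ →ₗ[ℝ] Matrix (Fin N) (Fin N) ℂ)
    (μ : ℝ) (S X : Matrix (Fin N) (Fin N) ℂ) : Matrix (Fin N) (Fin N) ℂ :=
  A X + (μ : ℂ) • (S⁻¹ * X * S⁻¹)

attribute [local instance] Matrix.normedAddCommGroup Matrix.normedSpace

section Calculus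

variable {𝕜 : Type*} [NontriviallyNormedField 𝕜] {E F : Type*}
  [NormedAddCommGroup E] [NormedSpace 𝕜 E] [NormedAddCommGroup F] [NormedSpace 𝕜 F]
  {s : Set 𝕜} {t : 𝕜}

theorem HasDerivWithinAt.linearMap_comp [CompleteSpace 𝕜] [FiniteDimensional 𝕜 E]
    (l : E →ₗ[𝕜] F) {f : 𝕜 → E} {f' : E} (hf : HasDerivWithinAt f f' s t) :
    HasDerivWithinAt (fun x => l (f x)) (l f') s t :=
  l.toContinuousLinearMap.hasFDerivAt.comp_hasDerivWithinAt t hf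

theorem HasDerivWithinAt.eq_zero_of_forall_eq_const {f : 𝕜 → F} {f' c : F}
    (hf : HasDerivWithinAt f f' s t) (hs : UniqueDiffWithinAt 𝕜 s t) (ht : t ∈ s)
    (hc : ∀ x ∈ s, f x = c) : f' = 0 :=
  hs.eq_deriv _ hf ((hasDerivWithinAt_const t s c).congr hc (hc t ht))

variable {m n p : Type*}

theorem hasDerivWithinAt_matrix_iff [Fintype n] {f : 𝕜 → Matrix m n E} {f' : Matrix m n E} :
    HasDerivWithinAt f f' s t ↔ ∀ i j, HasDerivWithinAt (fun x => f x i j) (f' i j) s t :=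
  hasDerivWithinAt_pi.trans <| forall_congr' fun _ => hasDerivWithinAt_pi

theorem HasDerivWithinAt.matrix_mul [Fintype n] [Fintype p] {R : Type*} [NormedRing R]
    [NormedAlgebra 𝕜 R] {f : 𝕜 → Matrix m n R} {g : 𝕜 → Matrix n p R}
    {f' : Matrix m n R} {g' : Matrix n p R}
    (hf : HasDerivWithinAt f f' s t) (hg : HasDerivWithinAt g g' s t) :
    HasDerivWithinAt (fun x => f x * g x) (f' * g t + f t * g') s t := by
  rw [hasDerivWithinAt_matrix_iff] at hf hg ⊢
  intro i k
  simp only [mul_apply, Matrix.add_apply, ← Finset.sum_add_distrib]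
  exact HasDerivWithinAt.fun_sum fun j _ => (hf i j).fun_mul (hg j k)

theorem HasDerivWithinAt.isHermitian [Fintype n] {𝕂 : Type*} [RCLike 𝕂]
    {f : ℝ → Matrix n n 𝕂} {f' : Matrix n n 𝕂} {s : Set ℝ} {t : ℝ}
    (hf : HasDerivWithinAt f f' s t) (hs : UniqueDiffWithinAt ℝ s t) (ht : t ∈ s)
    (hherm : ∀ x ∈ s, (f x).IsHermitian) :
    f'.IsHermitian :=
  hs.eq_deriv _ (hf.star.congr (fun x hx => (hherm x hx).symm) (hherm t ht).symm) hf

end Calculus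

open scoped MatrixOrder in
theorem Matrix.PosDef.trace_mul_mul_mul_pos {n 𝕜 : Type*} [Fintype n] [DecidableEq n]
    [RCLike 𝕜] {P Z : Matrix n n 𝕜} (hP : P.PosDef) (hZ : Z.IsHermitian) (hZ0 : Z ≠ 0) :
    0 < (Z * P * Z * P).trace := by
  obtain ⟨y, hy, rfl⟩ := CStarAlgebra.isStrictlyPositive_iff_eq_star_mul_self.mp
    hP.isStrictlyPositive
  set W := y * Z * yᴴ
  have hW : Wᴴ = W := by simp [W, conjTranspose_mul, hZ.eq, Matrix.mul_assoc]
  have htr : (Z * (star y * y) * Z * (star y * y)).trace = (Wᴴ * W).trace := by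
    simp only [hW, W, star_eq_conjTranspose, ← Matrix.mul_assoc]
    rw [trace_mul_comm]
    simp only [Matrix.mul_assoc]
  have hW0 : W ≠ 0 := by
    lift y to (Matrix n n 𝕜)ˣ using hy
    intro h
    apply hZ0
    have hZW : Z = (y⁻¹ : (Matrix n n 𝕜)ˣ) * W * ((star y)⁻¹ : (Matrix n n 𝕜)ˣ) := by
      simp [W, ← star_eq_conjTranspose, Matrix.mul_assoc, ← star_mul]
    rw [hZW, h, Matrix.mul_zero, Matrix.zero_mul]
  rw [htr]
  exact (posSemidef_conjTranspose_mul_self W).trace_nonneg.lt_of_ne'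
    (trace_conjTranspose_mul_self_eq_zero_iff.not.mpr hW0)

section Fop

variable {N : ℕ} {A : Matrix (Fin N) (Fin N) ℂ →ₗ[ℝ] Matrix (Fin N) (Fin N) ℂ} {μ : ℝ}
  {S : Matrix (Fin N) (Fin N) ℂ}

theorem Fop_sub (X Y : Matrix (Fin N) (Fin N) ℂ) :
    Fop A μ S (X - Y) = Fop A μ S X - Fop A μ S Y := by
  simp only [Fop, map_sub, Matrix.mul_sub, Matrix.sub_mul, smul_sub]
  abel

theorem Fop_smul (c : ℝ) (X : Matrix (Fin N) (Fin N) ℂ) :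
    Fop A μ S (c • X) = c • Fop A μ S X := by
  simp only [Fop, map_smul, Matrix.mul_smul, Matrix.smul_mul, smul_add, smul_comm c (μ : ℂ)]

theorem eq_zero_of_re_trace_mul_Fop_eq_zero
    (hA : ∀ X : Matrix (Fin N) (Fin N) ℂ, X.IsHermitian → 0 ≤ ((X * A X).trace).re)
    (hμ : 0 < μ) (hS : S.PosDef) {Z : Matrix (Fin N) (Fin N) ℂ} (hZ : Z.IsHermitian)
    (h : ((Z * Fop A μ S Z).trace).re = 0) : Z = 0 := by
  by_contra hZ0
  have hpos := (RCLike.pos_iff.1 (hS.inv.trace_mul_mul_mul_pos hZ hZ0)).1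
  have hsplit : ((Z * Fop A μ S Z).trace).re
      = ((Z * A Z).trace).re + μ * ((Z * S⁻¹ * Z * S⁻¹).trace).re := by
    simp [Fop, Matrix.mul_add, Matrix.mul_assoc, trace_add, trace_smul]
  simp only [RCLike.re_to_complex] at hpos
  linarith [hA Z hZ, mul_pos hμ hpos]

theorem eq_sub_smul_of_Fop_eq
    (hA : ∀ X : Matrix (Fin N) (Fin N) ℂ, X.IsHermitian → 0 ≤ ((X * A X).trace).re)
    (hμ : 0 < μ) (hS : S.PosDef) {V X Y K : Matrix (Fin N) (Fin N) ℂ} {c : ℝ}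
    (hV : V.IsHermitian) (hVtr : V.trace = 0) (hFV : Fop A μ S V = (c : ℂ) • 1 + K)
    (hX : X.IsHermitian) (hFX : Fop A μ S X = K) (hY : Y.IsHermitian) (hFY : Fop A μ S Y = 1) :
    V = X - ((X.trace.re / Y.trace.re : ℝ) : ℂ) • Y := by
  have hV_eq : V = X + c • Y := by
    have hZ : (V - X - c • Y).IsHermitian := (hV.sub hX).sub (hY.smul (IsSelfAdjoint.all c))
    have hFZ : Fop A μ S (V - X - c • Y) = 0 := by
      rw [Fop_sub, Fop_sub, Fop_smul, hFV, hFX, hFY, Complex.coe_smul]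
      abel
    have hZ0 := eq_zero_of_re_trace_mul_Fop_eq_zero hA hμ hS hZ
      (by rw [hFZ, Matrix.mul_zero, trace_zero, Complex.zero_re])
    rwa [sub_sub, sub_eq_zero] at hZ0
  rcases eq_or_ne Y.trace.re 0 with hYtr | hYtr
  · have hY0 : Y = 0 := eq_zero_of_re_trace_mul_Fop_eq_zero hA hμ hS hY
      (by rwa [hFY, Matrix.mul_one])
    simp [hV_eq, hY0]
  · have htr : X.trace.re + c * Y.trace.re = 0 := by
      simpa [hV_eq, trace_add, trace_smul] using congrArg Complex.re hVtr
    have hc : c = -(X.trace.re / Y.trace.re) := by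
      field_simp
      linarith
    rw [hV_eq, hc, neg_smul, Complex.coe_smul, sub_eq_add_neg]

theorem Fop_eq_of_hasDerivWithinAt {s : Set ℝ} {t : ℝ} (hs : UniqueDiffWithinAt ℝ s t)
    (ht : t ∈ s) {S B : ℝ → Matrix (Fin N) (Fin N) ℂ} {S' K : Matrix (Fin N) (Fin N) ℂ}
    {lam : ℝ → ℝ} {lam' : ℝ} (hS : HasDerivWithinAt S S' s t)
    (hlam : HasDerivWithinAt lam lam' s t) (hB : HasDerivWithinAt B K s t)
    (hSinv : ∀ x ∈ s, IsUnit (S x).det)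
    (hstat : ∀ x ∈ s, A (S x) - (μ : ℂ) • (S x)⁻¹ = ((lam x : ℝ) : ℂ) • 1 + B x) :
    Fop A μ (S t) S' = ((lam' : ℝ) : ℂ) • 1 + K := by
  set R := fun x => A (S x) - ((lam x : ℝ) : ℂ) • (1 : Matrix (Fin N) (Fin N) ℂ) - B x
  have hR : ∀ x ∈ s, R x = (μ : ℂ) • (S x)⁻¹ := fun x hx => by
    simp only [R, sub_sub, ← hstat x hx, sub_sub_cancel]
  have hR' : HasDerivWithinAt R (A S' - ((lam' : ℝ) : ℂ) • 1 - K) s t :=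
    ((hS.linearMap_comp A).sub (hlam.ofReal_comp.smul_const 1)).sub hB
  have hprod := (hS.matrix_mul hR').eq_zero_of_forall_eq_const hs ht fun x hx => by
    rw [hR x hx, Matrix.mul_smul, mul_nonsing_inv _ (hSinv x hx)]
  rw [hR t ht] at hprod
  have := congrArg ((S t)⁻¹ * ·) hprod
  simp only [Matrix.mul_add, ← Matrix.mul_assoc, nonsing_inv_mul _ (hSinv t ht), Matrix.one_mul,
    Matrix.mul_smul, Matrix.mul_zero] at this
  rw [Fop, ← sub_eq_zero, ← this]
  abel

end Fop

theorem sdm_dynamics_ode_general {N : ℕ}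
    (A : Matrix (Fin N) (Fin N) ℂ →ₗ[ℝ] Matrix (Fin N) (Fin N) ℂ)
    (hApsd : ∀ X : Matrix (Fin N) (Fin N) ℂ, X.IsHermitian → 0 ≤ ((X * A X).trace).re)
    (μ : ℝ) (hμ : 0 < μ) (T : ℝ) (hT : 0 < T)
    (S S' : ℝ → Matrix (Fin N) (Fin N) ℂ)
    (hSderiv : ∀ t ∈ Icc (0 : ℝ) T, ∀ j k : Fin N,
      HasDerivWithinAt (fun s => S s j k) (S' t j k) (Icc (0 : ℝ) T) t)
    (hSpd : ∀ t ∈ Icc (0 : ℝ) T, (S t).PosDef)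
    (hStr : ∀ t ∈ Icc (0 : ℝ) T, (S t).trace = 1)
    (lam lam' : ℝ → ℝ)
    (hlam : ∀ t ∈ Icc (0 : ℝ) T, HasDerivWithinAt lam (lam' t) (Icc (0 : ℝ) T) t)
    (B K : ℝ → Matrix (Fin N) (Fin N) ℂ)
    (hBderiv : ∀ t ∈ Icc (0 : ℝ) T, ∀ j k : Fin N,
      HasDerivWithinAt (fun s => B s j k) (K t j k) (Icc (0 : ℝ) T) t)
    (hstat : ∀ t ∈ Icc (0 : ℝ) T,
      A (S t) - (μ : ℂ) • (S t)⁻¹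
        = ((lam t : ℝ) : ℂ) • (1 : Matrix (Fin N) (Fin N) ℂ) + B t) :
    ∀ t ∈ Icc (0 : ℝ) T, ∀ X Y : Matrix (Fin N) (Fin N) ℂ,
      X.IsHermitian → Fop A μ (S t) X = K t →
      Y.IsHermitian → Fop A μ (S t) Y = 1 →
      S' t = X - ((X.trace.re / Y.trace.re : ℝ) : ℂ) • Y := by
  intro t ht X Y hX hFX hY hFY
  have hs : UniqueDiffWithinAt ℝ (Icc 0 T) t := uniqueDiffOn_Icc hT t ht
  have hS : HasDerivWithinAt S (S' t) (Icc 0 T) t := hasDerivWithinAt_matrix_iff.2 (hSderiv t ht)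
  have hB : HasDerivWithinAt B (K t) (Icc 0 T) t := hasDerivWithinAt_matrix_iff.2 (hBderiv t ht)
  have hS'herm : (S' t).IsHermitian :=
    hS.isHermitian hs ht fun x hx => (hSpd x hx).isHermitian
  have hS'tr : (S' t).trace = 0 :=
    (hS.linearMap_comp (traceLinearMap _ ℝ ℂ)).eq_zero_of_forall_eq_const hs ht hStr
  have hFS' : Fop A μ (S t) (S' t) = ((lam' t : ℝ) : ℂ) • 1 + K t :=
    Fop_eq_of_hasDerivWithinAt hs ht hS (hlam t ht) hB
      (fun x hx => (isUnit_iff_isUnit_det _).1 (hSpd x hx).isUnit) hstat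
  exact eq_sub_smul_of_Fop_eq hApsd hμ (hSpd t ht) hS'herm hS'tr hFS' hX hFX hY hFY

/-- (Theorem 2 of the paper, abstract form.) Suppose the
stationarity equation `𝒜(S(t)) - μ S(t)⁻¹ = λ(t) I + B(t)` holds on `[0,T]`
for a differentiable family `S(t)` of Hermitian positive definite matrices of
unit trace, a differentiable `λ`, and a differentiable Hermitian family `B`
with derivative `K`.  Then `S` obeys the ODE
`Ṡ = F_S⁻¹(K) - (Tr F_S⁻¹(K) / Tr F_S⁻¹(I)) F_S⁻¹(I)`,
where `F_S(X) = 𝒜(X) + μ S⁻¹ X S⁻¹` (here `X = F_S⁻¹(K)`, `Y = F_S⁻¹(I)`). -/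
theorem sdm_dynamics_ode {N : ℕ} (hN : 1 ≤ N)
    (A : Matrix (Fin N) (Fin N) ℂ →ₗ[ℝ] Matrix (Fin N) (Fin N) ℂ)
    (hAherm : ∀ X : Matrix (Fin N) (Fin N) ℂ, X.IsHermitian → (A X).IsHermitian)
    (hAsa : ∀ X Y : Matrix (Fin N) (Fin N) ℂ, X.IsHermitian → Y.IsHermitian →
      (X * A Y).trace = (A X * Y).trace)
    (hApsd : ∀ X : Matrix (Fin N) (Fin N) ℂ, X.IsHermitian → 0 ≤ ((X * A X).trace).re)
    (μ : ℝ) (hμ : 0 < μ) (T : ℝ) (hT : 0 < T)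
    (S S' : ℝ → Matrix (Fin N) (Fin N) ℂ)
    (hSderiv : ∀ t ∈ Icc (0 : ℝ) T, ∀ j k : Fin N,
      HasDerivWithinAt (fun s => S s j k) (S' t j k) (Icc (0 : ℝ) T) t)
    (hSpd : ∀ t ∈ Icc (0 : ℝ) T, (S t).PosDef)
    (hStr : ∀ t ∈ Icc (0 : ℝ) T, (S t).trace = 1)
    (lam lam' : ℝ → ℝ)
    (hlam : ∀ t ∈ Icc (0 : ℝ) T, HasDerivWithinAt lam (lam' t) (Icc (0 : ℝ) T) t)
    (B K : ℝ → Matrix (Fin N) (Fin N) ℂ)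
    (hBherm : ∀ t ∈ Icc (0 : ℝ) T, (B t).IsHermitian)
    (hBderiv : ∀ t ∈ Icc (0 : ℝ) T, ∀ j k : Fin N,
      HasDerivWithinAt (fun s => B s j k) (K t j k) (Icc (0 : ℝ) T) t)
    (hstat : ∀ t ∈ Icc (0 : ℝ) T,
      A (S t) - (μ : ℂ) • (S t)⁻¹
        = ((lam t : ℝ) : ℂ) • (1 : Matrix (Fin N) (Fin N) ℂ) + B t) :
    ∀ t ∈ Icc (0 : ℝ) T, ∀ X Y : Matrix (Fin N) (Fin N) ℂ,
      X.IsHermitian → Fop A μ (S t) X = K t →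
      Y.IsHermitian → Fop A μ (S t) Y = 1 →
      S' t = X - ((X.trace.re / Y.trace.re : ℝ) : ℂ) • Y :=
  sdm_dynamics_ode_general A hApsd μ hμ T hT S S' hSderiv hSpd hStr lam lam' hlam B K hBderiv hstat
end

section
/- Let n ≥ 1 and let g : ℝⁿ → ℝ be a continuously differentiable function that is 2π-periodic in each coordinate and has zero mean: ∫_{[0,2π)ⁿ} g(x) dx = 0. Then ∫_{[0,2π)ⁿ} |∇g(x)|² dx ≥ ∫_{[0,2π)ⁿ} g(x)² dx (the Poincaré–Wirtinger inequality on the n-dimensional torus, with constant 1). -/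
open MeasureTheory Real

/-- The fundamental domain `[0, 2π)ⁿ` of the `n`-dimensional torus. -/
def torusBox (n : ℕ) : Set (Fin n → ℝ) :=
  Set.univ.pi fun _ : Fin n => Set.Ico (0 : ℝ) (2 * π)

/-- `2π`-periodicity in each coordinate. -/
def TorusPeriodic {n : ℕ} {E : Type*} (u : (Fin n → ℝ) → E) : Prop :=
  ∀ (x : Fin n → ℝ) (i : Fin n), u (x + Pi.single i (2 * π)) = u x

/-!
Induction on the dimension. Averaging `g` over the circle in the first coordinate gives a
function `ḡ` of the remaining coordinates which is again periodic with zero mean, and whose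
partial derivatives are the averages of those of `g`. On each circle the mean square of `g` is
`ḡ² + ⨍ (g - ḡ)²`; the one-dimensional Wirtinger inequality (Parseval together with
`c_k(f') = i k c_k(f)`) bounds `⨍ (g - ḡ)²` by `⨍ (∂₀g)²`, and Jensen bounds `(∂ᵢḡ)²` by
`⨍ (∂ᵢ₊₁g)²`. Fubini and the inductive hypothesis for `ḡ` add these up to the claim.
-/

open Set intervalIntegral
open scoped Interval

theorem integral_eq_sub_mul_interval_average (u : ℝ → ℝ) (a b : ℝ) :
    ∫ x in a..b, u x = (b - a) * ⨍ x in a..b, u x := by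
  rcases eq_or_ne a b with rfl | hab
  · simp
  · rw [interval_average_eq, smul_eq_mul, mul_inv_cancel_left₀ (sub_ne_zero.2 hab.symm)]

theorem interval_average_sub_average_sq {a b : ℝ} {u : ℝ → ℝ}
    (hu : IntervalIntegrable u volume a b)
    (hu2 : IntervalIntegrable (fun x => u x ^ 2) volume a b) :
    ⨍ x in a..b, (u x - ⨍ y in a..b, u y) ^ 2
      = (⨍ x in a..b, u x ^ 2) - (⨍ x in a..b, u x) ^ 2 := by
  rcases eq_or_ne a b with rfl | hab
  · simp
  have hexp : ∀ x, (u x - ⨍ y in a..b, u y) ^ 2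
      = u x ^ 2 - 2 * (⨍ y in a..b, u y) * u x + (⨍ y in a..b, u y) ^ 2 := fun x => by ring
  simp_rw [hexp]
  rw [interval_average_eq, integral_add (hu2.sub (hu.const_mul _)) intervalIntegrable_const,
    integral_sub hu2 (hu.const_mul _), intervalIntegral.integral_const_mul,
    intervalIntegral.integral_const]
  simp only [interval_average_eq, smul_eq_mul]
  field_simp [sub_ne_zero.2 hab.symm]
  ring

theorem sq_interval_average_le_average_sq {a b : ℝ} {u : ℝ → ℝ}
    (hu : IntervalIntegrable u volume a b)
    (hu2 : IntervalIntegrable (fun x => u x ^ 2) volume a b) :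
    (⨍ x in a..b, u x) ^ 2 ≤ ⨍ x in a..b, u x ^ 2 := by
  have hvariance := interval_average_sub_average_sq hu hu2
  have hnonneg : 0 ≤ ⨍ x in a..b, (u x - ⨍ y in a..b, u y) ^ 2 := by
    rw [average_eq]
    exact smul_nonneg (by positivity) (MeasureTheory.integral_nonneg fun x => sq_nonneg _)
  linarith

theorem ContinuousOn.memLp_two_Ioc {a b : ℝ} {f : ℝ → ℂ} (hf : ContinuousOn f (Icc a b)) :
    MemLp f 2 (volume.restrict (Ioc a b)) :=
  (memLp_two_iff_integrable_sq_norm ((hf.mono Ioc_subset_Icc_self).aestronglyMeasurable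
    measurableSet_Ioc)).2 <| ((hf.norm.pow 2).integrableOn_Icc).mono_set Ioc_subset_Icc_self

theorem norm_fourierCoeffOn_le_of_hasDerivAt {a b : ℝ} (hab : a < b) {f f' : ℝ → ℂ}
    {n : ℤ} (hn : n ≠ 0) (hf : ∀ x ∈ [[a, b]], HasDerivAt f (f' x) x)
    (hf' : IntervalIntegrable f' volume a b) (hfab : f a = f b) :
    ‖fourierCoeffOn hab f n‖ ≤ (b - a) / (2 * π) * ‖fourierCoeffOn hab f' n‖ := by
  have hn1 : (1 : ℝ) ≤ |(n : ℝ)| := by exact_mod_cast Int.one_le_abs hn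
  rw [fourierCoeffOn_of_hasDerivAt hab hn hf hf', hfab, sub_self, mul_zero, zero_sub, norm_mul,
    norm_neg, norm_mul, ← Complex.ofReal_sub, Complex.norm_real,
    Real.norm_of_nonneg (sub_pos.2 hab).le]
  simp only [one_div, norm_inv, norm_mul, norm_neg, Complex.norm_ofNat, Complex.norm_real,
    Real.norm_of_nonneg pi_pos.le, Complex.norm_I, mul_one, Complex.norm_intCast]
  rw [← mul_assoc]
  gcongr
  rw [mul_inv, mul_comm, div_eq_mul_inv]
  gcongr
  exact mul_le_of_le_one_right (by positivity) (inv_le_one_of_one_le₀ hn1)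

theorem wirtinger_inequality {a b : ℝ} (hab : a < b) {f f' : ℝ → ℝ}
    (hf : ∀ x ∈ [[a, b]], HasDerivAt f (f' x) x) (hf' : ContinuousOn f' [[a, b]])
    (hfab : f a = f b) :
    ⨍ x in a..b, (f x - ⨍ y in a..b, f y) ^ 2
      ≤ ((b - a) / (2 * π)) ^ 2 * ⨍ x in a..b, f' x ^ 2 := by
  set c := ⨍ y in a..b, f y
  set F : ℝ → ℂ := fun x => ((f x - c : ℝ) : ℂ)
  set F' : ℝ → ℂ := fun x => (f' x : ℂ)
  have hF : ∀ x ∈ [[a, b]], HasDerivAt F (F' x) x := fun x hx =>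
    ((hf x hx).sub_const c).ofReal_comp
  have hFc : ContinuousOn F [[a, b]] := fun x hx => (hF x hx).continuousAt.continuousWithinAt
  have hF'c : ContinuousOn F' [[a, b]] := Complex.continuous_ofReal.comp_continuousOn hf'
  have hmean : ∫ x in a..b, (f x - c) = 0 := by
    have hfi : IntervalIntegrable f volume a b :=
      ContinuousOn.intervalIntegrable fun x hx => (hf x hx).continuousAt.continuousWithinAt
    rw [integral_sub hfi intervalIntegrable_const, intervalIntegral.integral_const, smul_eq_mul,
      integral_eq_sub_mul_interval_average, sub_self]
  have hcoeff_zero : fourierCoeffOn hab F 0 = 0 := by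
    simp only [fourierCoeffOn_eq_integral, neg_zero, fourier_zero, one_smul, F,
      intervalIntegral.integral_ofReal, hmean, Complex.ofReal_zero, smul_zero]
  have hcoeff_le : ∀ n, ‖fourierCoeffOn hab F n‖ ^ 2
      ≤ ((b - a) / (2 * π)) ^ 2 * ‖fourierCoeffOn hab F' n‖ ^ 2 := by
    intro n
    rcases eq_or_ne n 0 with rfl | hn
    · rw [hcoeff_zero, norm_zero, sq, zero_mul]
      positivity
    · rw [← mul_pow]
      gcongr
      exact norm_fourierCoeffOn_le_of_hasDerivAt hab hn hF hF'c.intervalIntegrable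
        (by simp only [F, hfab])
  rw [uIcc_of_le hab.le] at hFc hF'c
  have hparseval := hasSum_le hcoeff_le (hasSum_sq_fourierCoeffOn hab hFc.memLp_two_Ioc)
    ((hasSum_sq_fourierCoeffOn hab hF'c.memLp_two_Ioc).mul_left _)
  simpa only [F, F', Complex.norm_real, Real.norm_eq_abs, sq_abs, ← interval_average_eq]
    using hparseval

theorem intervalIntegral.hasDerivAt_integral_of_continuous {E : Type*} [NormedAddCommGroup E]
    [NormedSpace ℝ E] {F F' : ℝ → ℝ → E} (hF : Continuous F.uncurry)
    (hF' : Continuous F'.uncurry) (hFF' : ∀ s t, HasDerivAt (F · t) (F' s t) s)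
    (a b s₀ : ℝ) :
    HasDerivAt (fun s => ∫ t in a..b, F s t) (∫ t in a..b, F' s₀ t) s₀ := by
  obtain ⟨C, hC⟩ := ((isCompact_closedBall s₀ 1).prod (isCompact_uIcc (a := a) (b := b)))
    |>.exists_bound_of_continuousOn hF'.continuousOn
  have hcont : ∀ s, Continuous (F s) := fun s => hF.comp (Continuous.prodMk_right s)
  refine (hasDerivAt_integral_of_dominated_loc_of_deriv_le (bound := fun _ => C)
    (Metric.ball_mem_nhds s₀ one_pos) (.of_forall fun s => (hcont s).aestronglyMeasurable)
    ((hcont s₀).intervalIntegrable a b)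
    (hF'.comp (Continuous.prodMk_right s₀)).aestronglyMeasurable
    (.of_forall fun t ht s hs =>
      hC (s, t) ⟨Metric.ball_subset_closedBall hs, uIoc_subset_uIcc ht⟩)
    intervalIntegrable_const (.of_forall fun t _ s _ => hFF' s t)).2

def HasPartialDerivs {ι : Type*} [DecidableEq ι] (g : (ι → ℝ) → ℝ)
    (G : (ι → ℝ) → ι → ℝ) : Prop :=
  ∀ x i, HasDerivAt (fun t => g (Function.update x i t)) (G x i) (x i)

theorem Differentiable.hasPartialDerivs_fderiv {ι : Type*} [Fintype ι] [DecidableEq ι]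
    {g : (ι → ℝ) → ℝ} (hg : Differentiable ℝ g) :
    HasPartialDerivs g fun x i => fderiv ℝ g x (Pi.single i 1) := fun x i => by
  have h := (hg _).hasFDerivAt.comp_hasDerivAt (x i) (hasDerivAt_update x i (x i))
  rwa [Function.update_eq_self] at h

theorem Fin.cons_add_single_succ {α : Type*} [AddZeroClass α] {n : ℕ} (t c : α)
    (y : Fin n → α) (i : Fin n) :
    (Fin.cons t (y + Pi.single i c) : Fin (n + 1) → α) = Fin.cons t y + Pi.single i.succ c := by
  ext j
  cases j using Fin.cases <;> simp [Pi.single_apply]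

theorem Fin.cons_add_single_zero {α : Type*} [AddZeroClass α] {n : ℕ} (t c : α)
    (y : Fin n → α) : (Fin.cons (t + c) y : Fin (n + 1) → α) = Fin.cons t y + Pi.single 0 c := by
  ext j
  cases j using Fin.cases <;> simp

section Torus

variable {n : ℕ}

theorem measurableSet_torusBox : MeasurableSet (torusBox n) :=
  MeasurableSet.univ_pi fun _ => measurableSet_Ico

theorem Continuous.integrableOn_torusBox {φ : (Fin n → ℝ) → ℝ} (hφ : Continuous φ) :
    IntegrableOn φ (torusBox n) :=
  (hφ.continuousOn.integrableOn_compact (isCompact_univ_pi fun _ => isCompact_Icc)).mono_set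
    (pi_mono fun _ _ => Ico_subset_Icc_self)

theorem cons_mem_torusBox_succ {t : ℝ} {y : Fin n → ℝ} :
    Fin.cons t y ∈ torusBox (n + 1) ↔ t ∈ Ico 0 (2 * π) ∧ y ∈ torusBox n := by
  simp only [torusBox, mem_univ_pi, Fin.forall_fin_succ, Fin.cons_zero, Fin.cons_succ]

noncomputable def fiberAverage (φ : (Fin (n + 1) → ℝ) → ℝ) (y : Fin n → ℝ) : ℝ :=
  ⨍ t in 0..2 * π, φ (Fin.cons t y)

theorem integral_torusBox_succ {φ : (Fin (n + 1) → ℝ) → ℝ}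
    (hφ : IntegrableOn φ (torusBox (n + 1))) :
    ∫ x in torusBox (n + 1), φ x = 2 * π * ∫ y in torusBox n, fiberAverage φ y := by
  set e := (MeasurableEquiv.piFinSuccAbove (fun _ : Fin (n + 1) => ℝ) 0).symm
  have he : MeasurePreserving e := (volume_preserving_piFinSuccAbove _ 0).symm
  have he_apply : ∀ p : ℝ × (Fin n → ℝ), e p = Fin.cons p.1 p.2 := fun p => by
    simp [e, MeasurableEquiv.piFinSuccAbove_symm_apply, Fin.insertNthEquiv]
  have hpre : e ⁻¹' torusBox (n + 1) = Ico 0 (2 * π) ×ˢ torusBox n := by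
    ext p
    simp only [mem_preimage, he_apply, mem_prod, cons_mem_torusBox_succ]
  rw [← he.integrableOn_comp_preimage e.measurableEmbedding, hpre] at hφ
  rw [← he.setIntegral_preimage_emb e.measurableEmbedding, hpre, Measure.volume_eq_prod,
    ← Measure.prod_restrict, integral_prod_symm _ (by rwa [Measure.prod_restrict]),
    ← MeasureTheory.integral_const_mul]
  refine setIntegral_congr_fun measurableSet_torusBox fun y _ => ?_
  rw [fiberAverage, interval_average_eq, sub_zero, smul_eq_mul,
    mul_inv_cancel_left₀ two_pi_pos.ne', intervalIntegral.integral_of_le two_pi_pos.le,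
    integral_Ioc_eq_integral_Ioo, ← integral_Ico_eq_integral_Ioo]
  simp only [he_apply]

@[fun_prop]
theorem continuous_fiberAverage {φ : (Fin (n + 1) → ℝ) → ℝ} (hφ : Continuous φ) :
    Continuous (fiberAverage φ) := by
  unfold fiberAverage
  simp only [interval_average_eq]
  exact (continuous_parametric_intervalIntegral_of_continuous' (μ := volume)
    (f := fun y t => φ (Fin.cons t y)) (by fun_prop) _ _).const_smul ((2 * π - 0)⁻¹)

theorem torusPeriodic_fiberAverage {φ : (Fin (n + 1) → ℝ) → ℝ} (hφ : TorusPeriodic φ) :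
    TorusPeriodic (fiberAverage φ) := fun y i => by
  simp only [fiberAverage, Fin.cons_add_single_succ, hφ _ i.succ]

theorem hasPartialDerivs_fiberAverage {g : (Fin (n + 1) → ℝ) → ℝ}
    {G : (Fin (n + 1) → ℝ) → Fin (n + 1) → ℝ} (hg : Continuous g) (hG : Continuous G)
    (hgG : HasPartialDerivs g G) :
    HasPartialDerivs (fiberAverage g) fun y i => fiberAverage (fun x => G x i.succ) y := by
  intro y i
  simp only [fiberAverage, interval_average_eq]
  have h := hasDerivAt_integral_of_continuous
    (F := fun s t => g (Fin.cons t (Function.update y i s)))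
    (F' := fun s t => G (Fin.cons t (Function.update y i s)) i.succ) (by fun_prop) (by fun_prop)
    (fun s t => by
      simpa [Fin.cons_update] using hgG (Fin.cons t (Function.update y i s)) i.succ)
    0 (2 * π) (y i)
  rw [Function.update_eq_self] at h
  exact h.const_smul ((2 * π - 0)⁻¹)

theorem sq_fiberAverage_le {φ : (Fin (n + 1) → ℝ) → ℝ} (hφ : Continuous φ) (y : Fin n → ℝ) :
    fiberAverage φ y ^ 2 ≤ fiberAverage (fun x => φ x ^ 2) y :=
  sq_interval_average_le_average_sq
    ((by fun_prop : Continuous fun t => φ (Fin.cons t y)).intervalIntegrable _ _)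
    ((by fun_prop : Continuous fun t => φ (Fin.cons t y) ^ 2).intervalIntegrable _ _)

theorem fiberAverage_sq_le {g : (Fin (n + 1) → ℝ) → ℝ}
    {G : (Fin (n + 1) → ℝ) → Fin (n + 1) → ℝ} (hG : Continuous fun x => G x 0)
    (hgG : HasPartialDerivs g G) (hper : TorusPeriodic g) (y : Fin n → ℝ) :
    fiberAverage (fun x => g x ^ 2) y
      ≤ fiberAverage g y ^ 2 + fiberAverage (fun x => G x 0 ^ 2) y := by
  have hderiv : ∀ t, HasDerivAt (fun t => g (Fin.cons t y)) (G (Fin.cons t y) 0) t :=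
    fun t => by simpa using hgG (Fin.cons t y) 0
  have hcont : Continuous fun t => g (Fin.cons t y) :=
    continuous_iff_continuousAt.2 fun t => (hderiv t).continuousAt
  have hwirtinger := wirtinger_inequality two_pi_pos (fun t _ => hderiv t)
    (by fun_prop : Continuous fun t => G (Fin.cons t y) 0).continuousOn
    (by simpa [← Fin.cons_add_single_zero] using (hper (Fin.cons 0 y) 0).symm)
  rw [sub_zero, div_self two_pi_pos.ne', one_pow, one_mul, interval_average_sub_average_sq
    (hcont.intervalIntegrable _ _) ((hcont.pow 2).intervalIntegrable _ _)] at hwirtinger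
  simp only [fiberAverage]
  linarith

theorem poincare_wirtinger_torus_of_hasPartialDerivs {g : (Fin n → ℝ) → ℝ}
    {G : (Fin n → ℝ) → Fin n → ℝ} (hg : Continuous g) (hG : Continuous G)
    (hgG : HasPartialDerivs g G) (hper : TorusPeriodic g)
    (hmean : ∫ x in torusBox n, g x = 0) :
    ∫ x in torusBox n, g x ^ 2 ≤ ∑ i, ∫ x in torusBox n, G x i ^ 2 := by
  induction n with
  | zero =>
    have hsq : ∀ x, g x ^ 2 = g 0 * g x := fun x => by rw [sq, Subsingleton.elim x 0]
    simp only [hsq, MeasureTheory.integral_const_mul, hmean, mul_zero, Finset.univ_eq_empty,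
      Finset.sum_empty, le_refl]
  | succ n ih =>
    have hGi : ∀ i, Continuous fun x => G x i := fun i => (continuous_apply i).comp hG
    have hfubini : ∀ φ, Continuous φ →
        ∫ x in torusBox (n + 1), φ x = 2 * π * ∫ y in torusBox n, fiberAverage φ y :=
      fun φ hφ => integral_torusBox_succ hφ.integrableOn_torusBox
    have hmean_avg : ∫ y in torusBox n, fiberAverage g y = 0 := by
      rw [hfubini g hg] at hmean
      exact (mul_eq_zero.1 hmean).resolve_left two_pi_pos.ne'
    have hih := ih (continuous_fiberAverage hg)
      (continuous_pi fun i => continuous_fiberAverage (hGi i.succ))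
      (hasPartialDerivs_fiberAverage hg hG hgG) (torusPeriodic_fiberAverage hper) hmean_avg
    have hfiber : ∫ y in torusBox n, fiberAverage (fun x => g x ^ 2) y
        ≤ (∫ y in torusBox n, fiberAverage g y ^ 2)
          + ∫ y in torusBox n, fiberAverage (fun x => G x 0 ^ 2) y := by
      rw [← integral_add (Continuous.integrableOn_torusBox (by fun_prop))
        (Continuous.integrableOn_torusBox (by fun_prop))]
      exact setIntegral_mono_on (Continuous.integrableOn_torusBox (by fun_prop))
        (Continuous.integrableOn_torusBox (by fun_prop)) measurableSet_torusBox
        fun y _ => fiberAverage_sq_le (hGi 0) hgG hper y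
    have hjensen : ∀ i : Fin n, ∫ y in torusBox n, fiberAverage (fun x => G x i.succ) y ^ 2
        ≤ ∫ y in torusBox n, fiberAverage (fun x => G x i.succ ^ 2) y := fun i =>
      setIntegral_mono_on (Continuous.integrableOn_torusBox (by fun_prop))
        (Continuous.integrableOn_torusBox (by fun_prop)) measurableSet_torusBox
        fun y _ => sq_fiberAverage_le (hGi i.succ) y
    rw [hfubini (fun x => g x ^ 2) (by fun_prop), Fin.sum_univ_succ,
      hfubini (fun x => G x 0 ^ 2) (by fun_prop),
      Finset.sum_congr rfl fun i _ => hfubini (fun x => G x i.succ ^ 2) (by fun_prop),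
      ← Finset.mul_sum, ← mul_add]
    gcongr
    linarith [Finset.sum_le_sum fun i (_ : i ∈ Finset.univ) => hjensen i]

end Torus

theorem poincare_wirtinger_torus_general {n : ℕ}
    (g : (Fin n → ℝ) → ℝ) (hg : ContDiff ℝ 1 g) (hgper : TorusPeriodic g)
    (hmean : (∫ x in torusBox n, g x) = 0) :
    (∫ x in torusBox n, (g x) ^ 2)
      ≤ ∫ x in torusBox n, ∑ i, (fderiv ℝ g x (Pi.single i 1)) ^ 2 := by
  have hpartial : Continuous fun x i => fderiv ℝ g x (Pi.single i 1) :=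
    continuous_pi fun i => (hg.continuous_fderiv one_ne_zero).clm_apply continuous_const
  rw [integral_finsetSum _ fun i _ => Continuous.integrableOn_torusBox (by fun_prop)]
  exact poincare_wirtinger_torus_of_hasPartialDerivs hg.continuous hpartial
    (hg.differentiable one_ne_zero).hasPartialDerivs_fderiv hgper hmean

/-- (Poincaré--Wirtinger inequality on the torus with
constant 1.) A continuously differentiable `2π`-periodic function `g` of zero
mean satisfies `∫_{[0,2π)ⁿ} g² dx ≤ ∫_{[0,2π)ⁿ} |∇g|² dx`. -/
theorem poincare_wirtinger_torus {n : ℕ} (hn : 1 ≤ n)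
    (g : (Fin n → ℝ) → ℝ) (hg : ContDiff ℝ 1 g) (hgper : TorusPeriodic g)
    (hmean : (∫ x in torusBox n, g x) = 0) :
    (∫ x in torusBox n, (g x) ^ 2)
      ≤ ∫ x in torusBox n, ∑ i, (fderiv ℝ g x (Pi.single i 1)) ^ 2 :=
  poincare_wirtinger_torus_general g hg hgper hmean
end
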